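/- There is no finite constant C > 0 such that ∫_0^1 ( E[ e^{-Y²(1 + s²/2)} ] )^{1/2} ds ≤ C · ( E[ e^{-Y²}/Y² ] )^{1/2} holds for all random variables Y taking finitely many values in (0,∞). Equivalently: for every C > 0 there exists a random variable Y taking finitely many values in (0,∞) for which the left-hand side exceeds the right-hand side. -/

import Mathlib

open MeasureTheory

noncomputable section

/-- There is no finite constant `C > 0` such that
`∫_0^1 (E[e^{-Y²(1+s²/2)}])^{1/2} ds ≤ C (E[e^{-Y²}/Y²])^{1/2}`
for all random variables `Y` taking finitely many values in `(0,∞)`: for every `C > 0`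
there is a finitely-valued positive random variable (values `y i` with probabilities `p i`)
violating the inequality. -/
theorem no_constant_for_red01 :
    ∀ C : ℝ, 0 < C → ∃ (m : ℕ) (y p : Fin m → ℝ),
      (∀ i, 0 < y i) ∧ (∀ i, 0 ≤ p i) ∧ (∑ i, p i) = 1 ∧
      C * (∑ i, p i * (Real.exp (-(y i) ^ 2) / (y i) ^ 2)) ^ ((1 : ℝ) / 2)
        < ∫ s in (0 : ℝ)..1,
            (∑ i, p i * Real.exp (-(y i) ^ 2 * (1 + s ^ 2 / 2))) ^ ((1 : ℝ) / 2) := by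
  intro C hC
  -- choose the number of atoms
  obtain ⟨m, hm1, hmbig⟩ : ∃ m : ℕ, 1 ≤ m ∧ (Real.exp 1 * C) ^ 2 < (m : ℝ) := by
    refine ⟨⌊(Real.exp 1 * C) ^ 2⌋₊ + 1, Nat.le_add_left 1 _, ?_⟩
    have := Nat.lt_floor_add_one ((Real.exp 1 * C) ^ 2)
    push_cast; push_cast at this; linarith
  -- the values and probabilities
  set y : Fin m → ℝ := fun i => 2 ^ ((i : ℕ) + 1) with hydef
  have hypos : ∀ i, 0 < y i := fun i => by positivity
  set S : ℝ := ∑ i, (y i) ^ 2 * Real.exp ((y i) ^ 2) with hSdef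
  have hSpos : 0 < S := by
    have : Nonempty (Fin m) := Fin.pos_iff_nonempty.mp (by omega)
    exact Finset.sum_pos (fun i _ => by positivity) Finset.univ_nonempty
  set p : Fin m → ℝ := fun i => (y i) ^ 2 * Real.exp ((y i) ^ 2) / S with hpdef
  have hppos : ∀ i, 0 < p i := fun i => by
    have := hypos i; positivity
  refine ⟨m, y, p, hypos, fun i => (hppos i).le, ?_, ?_⟩
  · rw [hpdef, ← Finset.sum_div, ← hSdef, div_self hSpos.ne']
  -- the RHS sum is exactly m / S
  have hRHS : (∑ i, p i * (Real.exp (-(y i) ^ 2) / (y i) ^ 2)) = m / S := by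
    have hterm : ∀ i : Fin m, p i * (Real.exp (-(y i) ^ 2) / (y i) ^ 2) = 1 / S := by
      intro i
      have hy2 : (y i) ^ 2 ≠ 0 := by positivity
      have hexp : Real.exp ((y i) ^ 2) * Real.exp (-(y i) ^ 2) = 1 := by
        rw [← Real.exp_add]; simp
      rw [hpdef, div_mul_div_comm, mul_assoc, hexp, mul_one]
      rw [mul_comm S ((y i) ^ 2)]
      field_simp
      exact div_self (hypos i).ne'
    rw [Finset.sum_congr rfl (fun i _ => hterm i), Finset.sum_const, Finset.card_univ,
      Fintype.card_fin, nsmul_eq_mul, mul_one_div]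
  rw [hRHS]
  -- notation for the integrand
  set f : ℝ → ℝ := fun s => (∑ i, p i * Real.exp (-(y i) ^ 2 * (1 + s ^ 2 / 2))) ^ ((1 : ℝ) / 2)
    with hfdef
  have hfnonneg : ∀ s, 0 ≤ f s := fun s => by
    apply Real.rpow_nonneg
    exact Finset.sum_nonneg fun i _ => mul_nonneg (hppos i).le (Real.exp_nonneg _)
  have hfcont : Continuous f := by
    apply Continuous.rpow_const
    · exact continuous_finset_sum _ fun i _ => (continuous_const.mul (Real.continuous_exp.comp
        (by fun_prop)))
    · intro x; right; norm_num
  have hfint : ∀ a b : ℝ, IntervalIntegrable f volume a b := fun a b =>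
    hfcont.intervalIntegrable a b
  -- pointwise lower bound on each dyadic interval
  have hpt : ∀ (n : ℕ) (hn : n < m), ∀ s ∈ Set.Icc ((1 / 2 : ℝ) ^ (n + 1)) ((1 / 2 : ℝ) ^ n),
      (2 : ℝ) ^ (n + 1) * Real.exp (-1) / Real.sqrt S ≤ f s := by
    intro n hn s hs
    set i : Fin m := ⟨n, hn⟩ with hidef
    have hyi : y i = 2 ^ (n + 1) := rfl
    have hs0 : 0 ≤ s := le_trans (by positivity) hs.1
    have hys : y i * s ≤ 2 := by
      rw [hyi]
      calc (2:ℝ) ^ (n+1) * s ≤ 2 ^ (n+1) * (1/2) ^ n := by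
            exact mul_le_mul_of_nonneg_left hs.2 (by positivity)
        _ = 2 := by
            rw [pow_succ]
            field_simp
            rw [← mul_pow]; norm_num
    have hys2 : (y i) ^ 2 * s ^ 2 ≤ 4 := by
      nlinarith [mul_nonneg (hypos i).le hs0]
    have hexp1 : Real.exp (-(y i) ^ 2 - 2) ≤ Real.exp (-(y i) ^ 2 * (1 + s ^ 2 / 2)) := by
      apply Real.exp_le_exp.mpr; nlinarith
    have hlow : (y i) ^ 2 * Real.exp (-2) / S ≤
        ∑ j, p j * Real.exp (-(y j) ^ 2 * (1 + s ^ 2 / 2)) := by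
      have h1 : p i * Real.exp (-(y i) ^ 2 * (1 + s ^ 2 / 2)) ≤
          ∑ j, p j * Real.exp (-(y j) ^ 2 * (1 + s ^ 2 / 2)) :=
        Finset.single_le_sum
          (f := fun j => p j * Real.exp (-(y j) ^ 2 * (1 + s ^ 2 / 2)))
          (fun j _ => mul_nonneg (hppos j).le (Real.exp_nonneg _))
          (Finset.mem_univ i)
      refine le_trans ?_ h1
      have h2 : (y i) ^ 2 * Real.exp (-2) / S ≤ p i * Real.exp (-(y i) ^ 2 - 2) := by
        rw [hpdef]
        have heq : (y i) ^ 2 * Real.exp ((y i) ^ 2) / S * Real.exp (-(y i) ^ 2 - 2)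
            = (y i) ^ 2 * Real.exp (-2) / S := by
          rw [div_mul_eq_mul_div, mul_assoc, ← Real.exp_add,
            show (y i) ^ 2 + (-(y i) ^ 2 - 2) = -2 from by ring]
        rw [heq]
      exact le_trans h2 (mul_le_mul_of_nonneg_left hexp1 (hppos i).le)
    have hexpsq : (Real.exp (-1)) ^ 2 = Real.exp (-2) := by
      rw [pow_two, ← Real.exp_add]; norm_num
    have hsq : ((2 : ℝ) ^ (n + 1) * Real.exp (-1) / Real.sqrt S) ^ 2
        = (y i) ^ 2 * Real.exp (-2) / S := by
      rw [div_pow, mul_pow, Real.sq_sqrt hSpos.le, hyi, hexpsq]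
    have hnn : 0 ≤ (2 : ℝ) ^ (n + 1) * Real.exp (-1) / Real.sqrt S :=
      div_nonneg (mul_nonneg (by positivity) (Real.exp_nonneg _)) (Real.sqrt_nonneg S)
    have hconst : (2 : ℝ) ^ (n + 1) * Real.exp (-1) / Real.sqrt S
        = ((y i) ^ 2 * Real.exp (-2) / S) ^ ((1:ℝ)/2) := by
      rw [← Real.sqrt_eq_rpow, ← hsq, Real.sqrt_sq hnn]
    rw [hconst]
    have hhalf : (0:ℝ) ≤ 1/2 := by norm_num
    have hb : 0 ≤ (y i) ^ 2 * Real.exp (-2) / S :=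
      div_nonneg (mul_nonneg (sq_nonneg _) (Real.exp_nonneg _)) hSpos.le
    exact Real.rpow_le_rpow hb hlow hhalf
  -- lower bound on each piece of the integral
  set c : ℝ := Real.exp (-1) / Real.sqrt S with hcdef
  have hcpos : 0 < c := div_pos (Real.exp_pos _) (Real.sqrt_pos.mpr hSpos)
  have hpiece : ∀ (n : ℕ), n < m →
      c ≤ ∫ s in ((1 / 2 : ℝ) ^ (n + 1))..((1 / 2 : ℝ) ^ n), f s := by
    intro n hn
    have hab : ((1 / 2 : ℝ) ^ (n + 1)) ≤ (1 / 2 : ℝ) ^ n :=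
      pow_le_pow_of_le_one (by norm_num) (by norm_num) (Nat.le_succ n)
    have hmono := intervalIntegral.integral_mono_on (μ := volume) hab
      (intervalIntegrable_const
        (c := (2 : ℝ) ^ (n + 1) * Real.exp (-1) / Real.sqrt S)) (hfint _ _) (hpt n hn)
    rw [intervalIntegral.integral_const, smul_eq_mul] at hmono
    refine le_trans (le_of_eq ?_) hmono
    have : (1 / 2 : ℝ) ^ n - (1 / 2 : ℝ) ^ (n + 1) = (1 / 2 : ℝ) ^ (n + 1) := by
      rw [pow_succ]; ring
    rw [this, hcdef]
    have h2 : (1 / 2 : ℝ) ^ (n + 1) * (2 : ℝ) ^ (n + 1) = 1 := by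
      rw [← mul_pow]; norm_num
    calc Real.exp (-1) / Real.sqrt S
        = ((1 / 2 : ℝ) ^ (n + 1) * (2 : ℝ) ^ (n + 1)) * Real.exp (-1) / Real.sqrt S := by
          rw [h2, one_mul]
      _ = (1 / 2 : ℝ) ^ (n + 1) * ((2 : ℝ) ^ (n + 1) * Real.exp (-1) / Real.sqrt S) := by
          ring
  -- sum the pieces
  have hmain : ∀ n : ℕ, n ≤ m → (n : ℝ) * c ≤ ∫ s in ((1 / 2 : ℝ) ^ n)..1, f s := by
    intro n
    induction n with
    | zero => intro _; simp
    | succ k ih =>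
      intro hk
      have hk' : k ≤ m := Nat.le_of_succ_le hk
      have hsplit : (∫ s in ((1 / 2 : ℝ) ^ (k + 1))..((1 / 2 : ℝ) ^ k), f s)
          + (∫ s in ((1 / 2 : ℝ) ^ k)..1, f s) = ∫ s in ((1 / 2 : ℝ) ^ (k + 1))..1, f s :=
        intervalIntegral.integral_add_adjacent_intervals (hfint _ _) (hfint _ _)
      rw [← hsplit]
      push_cast
      have := hpiece k (Nat.lt_of_succ_le hk)
      have := ih hk'
      linarith
  have hlhs : (m : ℝ) * c ≤ ∫ s in (0 : ℝ)..1, f s := by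
    have hsplit : (∫ s in (0 : ℝ)..((1 / 2 : ℝ) ^ m), f s)
        + (∫ s in ((1 / 2 : ℝ) ^ m)..1, f s) = ∫ s in (0 : ℝ)..1, f s :=
      intervalIntegral.integral_add_adjacent_intervals (hfint _ _) (hfint _ _)
    have h0 : 0 ≤ ∫ s in (0 : ℝ)..((1 / 2 : ℝ) ^ m), f s :=
      intervalIntegral.integral_nonneg (by positivity : (0:ℝ) ≤ (1/2:ℝ)^m)
        (fun x _ => hfnonneg x)
    have := hmain m le_rfl
    linarith
  -- final comparison
  refine lt_of_lt_of_le ?_ hlhs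
  have hmS : ((m : ℝ) / S) ^ ((1:ℝ)/2) = Real.sqrt m / Real.sqrt S := by
    rw [← Real.sqrt_eq_rpow, Real.sqrt_div (Nat.cast_nonneg m)]
  rw [hmS, hcdef]
  have hsqS : 0 < Real.sqrt S := Real.sqrt_pos.mpr hSpos
  have h1 : Real.exp 1 * C < Real.sqrt m :=
    (Real.lt_sqrt (by positivity)).mpr hmbig
  have h2 : Real.sqrt m * Real.sqrt m = (m : ℝ) := Real.mul_self_sqrt (Nat.cast_nonneg m)
  have h3 : Real.exp (-1) * Real.exp 1 = 1 := by rw [← Real.exp_add]; norm_num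
  have h4 : 0 < Real.exp 1 := Real.exp_pos 1
  have h5 : 0 < Real.sqrt m := lt_trans (by positivity) h1
  have hkey : C * Real.sqrt m < (m : ℝ) * Real.exp (-1) := by
    nlinarith [Real.exp_pos (-1)]
  calc C * (Real.sqrt m / Real.sqrt S) = (C * Real.sqrt m) / Real.sqrt S := by ring
    _ < ((m : ℝ) * Real.exp (-1)) / Real.sqrt S := div_lt_div_of_pos_right hkey hsqS
    _ = (m : ℝ) * (Real.exp (-1) / Real.sqrt S) := by ring
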